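/- On ℝ⁵ with coordinates (c₁,c₂,c₃,c₄,c₅), define the functions r₁ = c₅, r₂ = c₄, r₃ = c₃, r₄ = (1/2)(c₂ + 3c₃c₅), r₅ = (1/2)(c₁ − 3c₃c₄). Then the following identities of 1-forms hold at every point of ℝ⁵: dr₃ + r₁dr₂ − r₂dr₁ = Θ₃; dr₄ + (1/2)(r₃dr₁ − r₁dr₃) = (1/2)Θ₂; dr₅ + (1/2)(r₂dr₃ − r₃dr₂) = (1/2)Θ₁. -/
import Mathlib


noncomputable section

/-- The `i`-th coordinate 1-form on ℝ⁵. -/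
def co (i : Fin 5) : (Fin 5 → ℝ) →L[ℝ] ℝ := ContinuousLinearMap.proj i

/-- `Θ₁ = dc₁ − 2c₄dc₃ − 4c₃dc₄` in coordinates `(c₁,…,c₅)`. -/
def Θ₁ (c : Fin 5 → ℝ) : (Fin 5 → ℝ) →L[ℝ] ℝ :=
  co 0 - (2 * c 3) • co 2 - (4 * c 2) • co 3

/-- `Θ₂ = dc₂ + 2c₅dc₃ + 4c₃dc₅`. -/
def Θ₂ (c : Fin 5 → ℝ) : (Fin 5 → ℝ) →L[ℝ] ℝ :=
  co 1 + (2 * c 4) • co 2 + (4 * c 2) • co 4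

/-- `Θ₃ = dc₃ + c₅dc₄ − c₄dc₅`. -/
def Θ₃ (c : Fin 5 → ℝ) : (Fin 5 → ℝ) →L[ℝ] ℝ :=
  co 2 + c 4 • co 3 - c 3 • co 4

/-- `r₁ = c₅`. -/
def r₁ : (Fin 5 → ℝ) → ℝ := fun c => c 4
/-- `r₂ = c₄`. -/
def r₂ : (Fin 5 → ℝ) → ℝ := fun c => c 3
/-- `r₃ = c₃`. -/
def r₃ : (Fin 5 → ℝ) → ℝ := fun c => c 2
/-- `r₄ = (1/2)(c₂ + 3c₃c₅)`. -/
def r₄ : (Fin 5 → ℝ) → ℝ := fun c => (1 / 2) * (c 1 + 3 * c 2 * c 4)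
/-- `r₅ = (1/2)(c₁ − 3c₃c₄)`. -/
def r₅ : (Fin 5 → ℝ) → ℝ := fun c => (1 / 2) * (c 0 - 3 * c 2 * c 3)


lemma hco (i : Fin 5) (c : Fin 5 → ℝ) : HasFDerivAt (fun c : Fin 5 → ℝ => c i) (co i) c :=
  (co i).hasFDerivAt

/-- The Engel-type 1-forms built from `r₁,…,r₅` coincide with the forms
`Θ₃`, `(1/2)Θ₂`, `(1/2)Θ₁` at every point of ℝ⁵. -/
theorem engel_forms_from_Theta :
    (∀ c : Fin 5 → ℝ,
        fderiv ℝ r₃ c + r₁ c • fderiv ℝ r₂ c - r₂ c • fderiv ℝ r₁ c = Θ₃ c) ∧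
    (∀ c : Fin 5 → ℝ,
        fderiv ℝ r₄ c + (1 / 2 : ℝ) • (r₃ c • fderiv ℝ r₁ c - r₁ c • fderiv ℝ r₃ c)
          = (1 / 2 : ℝ) • Θ₂ c) ∧
    (∀ c : Fin 5 → ℝ,
        fderiv ℝ r₅ c + (1 / 2 : ℝ) • (r₂ c • fderiv ℝ r₃ c - r₃ c • fderiv ℝ r₂ c)
          = (1 / 2 : ℝ) • Θ₁ c) := by
  refine ⟨?_, ?_, ?_⟩ <;> intro c
  · have e1 : fderiv ℝ r₁ c = co 4 := (hco 4 c).fderiv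
    have e2 : fderiv ℝ r₂ c = co 3 := (hco 3 c).fderiv
    have e3 : fderiv ℝ r₃ c = co 2 := (hco 2 c).fderiv
    rw [e1, e2, e3]
    ext x
    simp [Θ₃, co, r₁, r₂]
  · have h4 := (((hco 1 c).add (((hco 2 c).const_mul (3:ℝ)).mul (hco 4 c))).const_mul ((1:ℝ)/2))
    have e4 : fderiv ℝ r₄ c = _ := HasFDerivAt.fderiv (f := r₄) h4
    have e1 : fderiv ℝ r₁ c = co 4 := (hco 4 c).fderiv
    have e3 : fderiv ℝ r₃ c = co 2 := (hco 2 c).fderiv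
    rw [e1, e3, e4]
    ext x
    simp [Θ₂, co, r₁, r₃]
    ring
  · have h5 := (((hco 0 c).sub (((hco 2 c).const_mul (3:ℝ)).mul (hco 3 c))).const_mul ((1:ℝ)/2))
    have e5 : fderiv ℝ r₅ c = _ := HasFDerivAt.fderiv (f := r₅) h5
    have e2 : fderiv ℝ r₂ c = co 3 := (hco 3 c).fderiv
    have e3 : fderiv ℝ r₃ c = co 2 := (hco 2 c).fderiv
    rw [e2, e3, e5]
    ext x
    simp [Θ₁, co, r₂, r₃]
    ring

end
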